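/- Every robust protocol over an erasure channel has a noise-independent order of speaking: for every deterministic robust interactive protocol of length N over an erasure channel with finite alphabet Σ, and every input pair (x,y), there exists a function g : {1,…,N} → {Alice, Bob} such that for every erasure pattern E ⊆ {1,…,N}, the sender of round i in the execution on inputs (x,y) with erasure pattern E is g(i). -/

import Mathlib

/-- A deterministic interactive protocol of length `N` over an erasure channel with
alphabet `Γ`, where the party to send at each round is decided by each party as a
function of its own view. A view item is `some s` for a symbol the party sent or
received intact, and `none` for an erased reception. There is no feedback: the sender
does not learn whether its transmission was erased. -/
structure AdaptiveErasureProtocol (Γ X Y : Type) (N : ℕ) where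
  decideA : X → List (Option Γ) → Bool
  decideB : Y → List (Option Γ) → Bool
  nextA : X → List (Option Γ) → Γ
  nextB : Y → List (Option Γ) → Γ

/-- The pair (Alice's view, Bob's view) after the first `i` rounds of the execution on
inputs `x, y` with erasure pattern `E` (by convention Alice sends iff her decision
function says so; for robust protocols Bob's decision agrees). The sender appends its
sent symbol to its view; the receiver appends `none` if the round is erased and the
sent symbol otherwise. -/
def AdaptiveErasureProtocol.views {Γ X Y : Type} {N : ℕ}
    (P : AdaptiveErasureProtocol Γ X Y N) (x : X) (y : Y) (E : Finset (Fin N)) :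
    ℕ → List (Option Γ) × List (Option Γ)
  | 0 => ([], [])
  | i+1 =>
    let v := P.views x y E i
    if h : i < N then
      if P.decideA x v.1 then
        let s := P.nextA x v.1
        (v.1 ++ [some s], v.2 ++ [if (⟨i, h⟩ : Fin N) ∈ E then none else some s])
      else
        let s := P.nextB y v.2
        (v.1 ++ [if (⟨i, h⟩ : Fin N) ∈ E then none else some s], v.2 ++ [some s])
    else v

/-!
Fix the inputs and a round `i`, and compare an erasure pattern `E` with the pattern that erases
everything. Walk from one to the other by erasing the rounds `k < i` one at a time, each time
with every later round already erased. Changing whether round `k` is erased is invisible to the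
sender of round `k`, and from then on all rounds are erased, so that party's view stays the same
up to round `i`: trivially for Alice, whose own decision fixes the speaker, and for Bob because
robustness lets his own view fix the speaker. Either way the speaker at round `i` is unchanged.
-/

namespace AdaptiveErasureProtocol

variable {Γ X Y : Type} {N : ℕ} (P : AdaptiveErasureProtocol Γ X Y N) (x : X) (y : Y)

def Robust : Prop :=
  ∀ (E : Finset (Fin N)) (i : ℕ), i < N →
    P.decideA x (P.views x y E i).1 = !P.decideB y (P.views x y E i).2

/-- Agree with `E` before round `k` and erase every round from `k` on. -/
def eraseFrom (E : Finset (Fin N)) (k : ℕ) : Finset (Fin N) :=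
  {j | j.val < k → j ∈ E}

variable {P x y}

theorem views_congr {E E' : Finset (Fin N)} {i : ℕ}
    (h : ∀ j : Fin N, j.val < i → (j ∈ E ↔ j ∈ E')) :
    P.views x y E i = P.views x y E' i := by
  induction i with
  | zero => rfl
  | succ i ih =>
    have hv := ih fun j hj => h j (by omega)
    by_cases hN : i < N
    · have hi : (⟨i, hN⟩ : Fin N) ∈ E ↔ ⟨i, hN⟩ ∈ E' := h ⟨i, hN⟩ (by simp)
      simp only [views, dif_pos hN, hv, hi]
    · simp only [views, dif_neg hN, hv]

theorem views_fst_eq_of_erased {E E' : Finset (Fin N)} {k i : ℕ} (hki : k ≤ i)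
    (hk : (P.views x y E k).1 = (P.views x y E' k).1)
    (hE : ∀ j : Fin N, k ≤ j.val → j.val < i → j ∈ E)
    (hE' : ∀ j : Fin N, k ≤ j.val → j.val < i → j ∈ E') :
    (P.views x y E i).1 = (P.views x y E' i).1 := by
  induction i, hki using Nat.le_induction with
  | base => exact hk
  | succ n hkn ih =>
    have hn := ih (fun j h₁ h₂ => hE j h₁ (by omega)) (fun j h₁ h₂ => hE' j h₁ (by omega))
    by_cases hN : n < N
    · have hnE := hE ⟨n, hN⟩ hkn (by simp)
      have hnE' := hE' ⟨n, hN⟩ hkn (by simp)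
      by_cases hA : P.decideA x (P.views x y E' n).1
      · simp only [views, dif_pos hN, hn, if_pos hA]
      · simp only [views, dif_pos hN, hn, if_neg hA, if_pos hnE, if_pos hnE']
    · simpa only [views, dif_neg hN] using hn

theorem views_snd_eq_of_erased (hP : P.Robust x y) {E E' : Finset (Fin N)} {k i : ℕ}
    (hki : k ≤ i) (hk : (P.views x y E k).2 = (P.views x y E' k).2)
    (hE : ∀ j : Fin N, k ≤ j.val → j.val < i → j ∈ E)
    (hE' : ∀ j : Fin N, k ≤ j.val → j.val < i → j ∈ E') :
    (P.views x y E i).2 = (P.views x y E' i).2 := by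
  induction i, hki using Nat.le_induction with
  | base => exact hk
  | succ n hkn ih =>
    have hn := ih (fun j h₁ h₂ => hE j h₁ (by omega)) (fun j h₁ h₂ => hE' j h₁ (by omega))
    by_cases hN : n < N
    · have hnE := hE ⟨n, hN⟩ hkn (by simp)
      have hnE' := hE' ⟨n, hN⟩ hkn (by simp)
      have hA : P.decideA x (P.views x y E n).1 = P.decideA x (P.views x y E' n).1 := by
        rw [hP E n hN, hP E' n hN, hn]
      by_cases hA' : P.decideA x (P.views x y E' n).1
      · simp only [views, dif_pos hN, hn, hA, if_pos hA', if_pos hnE, if_pos hnE']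
      · simp only [views, dif_pos hN, hn, hA, if_neg hA']
    · simpa only [views, dif_neg hN] using hn

theorem decideA_views_eq_of_erased_after (hP : P.Robust x y) {E E' : Finset (Fin N)} {k i : ℕ}
    (hki : k < i) (hiN : i < N) (hbelow : ∀ j : Fin N, j.val < k → (j ∈ E ↔ j ∈ E'))
    (hE : ∀ j : Fin N, k < j.val → j.val < i → j ∈ E)
    (hE' : ∀ j : Fin N, k < j.val → j.val < i → j ∈ E') :
    P.decideA x (P.views x y E i).1 = P.decideA x (P.views x y E' i).1 := by
  have hk : P.views x y E k = P.views x y E' k := views_congr hbelow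
  have hkN : k < N := hki.trans hiN
  by_cases hA : P.decideA x (P.views x y E' k).1
  · have hk₁ : (P.views x y E (k + 1)).1 = (P.views x y E' (k + 1)).1 := by
      simp only [views, dif_pos hkN, hk, if_pos hA]
    rw [views_fst_eq_of_erased hki hk₁ hE hE']
  · have hk₁ : (P.views x y E (k + 1)).2 = (P.views x y E' (k + 1)).2 := by
      simp only [views, dif_pos hkN, hk, if_neg hA]
    rw [hP E i hiN, hP E' i hiN, views_snd_eq_of_erased hP hki hk₁ hE hE']

theorem decideA_views_eraseFrom_succ (hP : P.Robust x y) (E : Finset (Fin N)) {k i : ℕ}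
    (hki : k < i) (hiN : i < N) :
    P.decideA x (P.views x y (eraseFrom E (k + 1)) i).1 =
      P.decideA x (P.views x y (eraseFrom E k) i).1 := by
  refine decideA_views_eq_of_erased_after hP hki hiN (fun j hj => ?_) (fun j hj _ => ?_)
    (fun j hj _ => ?_)
  · simp [eraseFrom, hj, hj.le]
  all_goals simp only [eraseFrom, Finset.mem_filter, Finset.mem_univ, true_and]; omega

theorem decideA_views_eq_univ (hP : P.Robust x y) (E : Finset (Fin N)) {i : ℕ} (hiN : i < N) :
    P.decideA x (P.views x y E i).1 = P.decideA x (P.views x y Finset.univ i).1 := by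
  have hhybrid : ∀ k ≤ i, P.decideA x (P.views x y (eraseFrom E k) i).1 =
      P.decideA x (P.views x y Finset.univ i).1 := by
    intro k hk
    induction k with
    | zero => simp [eraseFrom]
    | succ k ih => rw [decideA_views_eraseFrom_succ hP E hk hiN, ih (by omega)]
  have hE : P.views x y (eraseFrom E i) i = P.views x y E i :=
    views_congr fun j hj => by simp [eraseFrom, hj]
  rw [← hhybrid i le_rfl, hE]

end AdaptiveErasureProtocol

open AdaptiveErasureProtocol in
theorem robust_erasure_protocol_has_fixed_order_general
    (Γ X Y : Type) (N : ℕ) (P : AdaptiveErasureProtocol Γ X Y N)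
    (hrobust : ∀ (x : X) (y : Y) (E : Finset (Fin N)) (i : ℕ), i < N →
      P.decideA x (P.views x y E i).1 = !P.decideB y (P.views x y E i).2) :
    ∀ (x : X) (y : Y), ∃ g : Fin N → Bool,
      ∀ (E : Finset (Fin N)) (i : Fin N),
        P.decideA x (P.views x y E i.val).1 = g i :=
  fun x y => ⟨fun i => P.decideA x (P.views x y Finset.univ i).1,
    fun E i => decideA_views_eq_univ (hrobust x y) E i.isLt⟩

/-- Every robust protocol over an erasure channel has a noise-independent
order of speaking: if for every input pair and every erasure pattern the two parties'
decisions of who sends agree at every round (robustness), then for every input pair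
(x,y) there is a function g on rounds such that for every erasure pattern, the sender
of round i in the execution on (x,y) is g(i). -/
theorem robust_erasure_protocol_has_fixed_order
    (Γ X Y : Type) [Fintype Γ] (N : ℕ) (P : AdaptiveErasureProtocol Γ X Y N)
    (hrobust : ∀ (x : X) (y : Y) (E : Finset (Fin N)) (i : ℕ), i < N →
      P.decideA x (P.views x y E i).1 = !P.decideB y (P.views x y E i).2) :
    ∀ (x : X) (y : Y), ∃ g : Fin N → Bool,
      ∀ (E : Finset (Fin N)) (i : Fin N),
        P.decideA x (P.views x y E i.val).1 = g i :=
  robust_erasure_protocol_has_fixed_order_general Γ X Y N P hrobust
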